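/- Let σ, μ, λ* ∈ ℂ and let u : (0,∞) → ℂ be smooth. Define y(x) = r(x)⁻¹·u(sinh²(x/2)) for x > 0. Then for all x > 0: y''(x) + (λ* − q*(x))·y(x) = r(x)⁻¹·( (𝒟_{σ,μ}u)(sinh²(x/2)) + λ*·u(sinh²(x/2)) ). In particular, u satisfies 𝒟_{σ,μ}u + λ*u = 0 on (0,∞) if and only if y satisfies y'' + (λ* − q*)y = 0 on (0,∞). -/

import Mathlib

noncomputable section

/-- The hypergeometric-type operator `𝒟_{σ,μ}u(t) = t(1+t)u'' + (((μ−σ+2)/2)t + μ/2)u'`. -/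
def Dop (σ μ : ℂ) (u : ℝ → ℂ) (t : ℝ) : ℂ :=
  (t : ℂ) * (1 + (t : ℂ)) * deriv (deriv u) t + ((μ - σ + 2) / 2 * (t : ℂ) + μ / 2) * deriv u t

/-- `r(x) = sinh(x/2)^{−(μ−1)/2} cosh(x/2)^{(σ−1)/2}`. -/
def rfun (σ μ : ℂ) (x : ℝ) : ℂ :=
  ((Real.sinh (x / 2) : ℝ) : ℂ) ^ (-((μ - 1) / 2)) * ((Real.cosh (x / 2) : ℝ) : ℂ) ^ ((σ - 1) / 2)

/-- `q*(x) = ((μ−1)(μ−3)/16)tanh(x/2)⁻² − (μ(σ−2)+1)/8 + ((σ+1)(σ−1)/16)tanh(x/2)²`. -/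
def qstar (σ μ : ℂ) (x : ℝ) : ℂ :=
  ((μ - 1) * (μ - 3) / 16) * (((Real.tanh (x / 2) : ℝ) : ℂ) ^ 2)⁻¹ - (μ * (σ - 2) + 1) / 8 +
    ((σ + 1) * (σ - 1) / 16) * ((Real.tanh (x / 2) : ℝ) : ℂ) ^ 2

def gfun (σ μ : ℂ) (x : ℝ) : ℂ :=
  ((Real.sinh (x / 2) : ℝ) : ℂ) ^ ((μ - 1) / 2) * ((Real.cosh (x / 2) : ℝ) : ℂ) ^ ((1 - σ) / 2)

def Lfun (σ μ : ℂ) (x : ℝ) : ℂ :=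
  ((μ - 1) / 2 * (((Real.cosh (x/2) : ℝ) : ℂ) / ((Real.sinh (x/2) : ℝ) : ℂ)) +
   (1 - σ) / 2 * (((Real.sinh (x/2) : ℝ) : ℂ) / ((Real.cosh (x/2) : ℝ) : ℂ))) / 2

lemma hrg (σ μ : ℂ) (x : ℝ) : (rfun σ μ x)⁻¹ = gfun σ μ x := by
  rw [rfun, gfun, mul_inv, Complex.cpow_neg, inv_inv, show (σ - 1)/2 = -((1-σ)/2) by ring,
    Complex.cpow_neg, inv_inv]

lemma hsinh2 (x : ℝ) : HasDerivAt (fun y : ℝ => Real.sinh (y/2)) (Real.cosh (x/2) / 2) x := by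
  have h := (Real.hasDerivAt_sinh (x/2)).comp x ((hasDerivAt_id x).div_const 2)
  simpa [Function.comp_def, mul_comm, div_eq_mul_inv] using h

lemma hcosh2 (x : ℝ) : HasDerivAt (fun y : ℝ => Real.cosh (y/2)) (Real.sinh (x/2) / 2) x := by
  have h := (Real.hasDerivAt_cosh (x/2)).comp x ((hasDerivAt_id x).div_const 2)
  simpa [Function.comp_def, mul_comm, div_eq_mul_inv] using h

lemma hg (σ μ : ℂ) {x : ℝ} (hx : 0 < x) :
    HasDerivAt (gfun σ μ) (gfun σ μ x * Lfun σ μ x) x := by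
  have hs : (0:ℝ) < Real.sinh (x/2) := Real.sinh_pos_iff.2 (by linarith)
  have hc : (0:ℝ) < Real.cosh (x/2) := Real.cosh_pos _
  have hsC : ((Real.sinh (x/2) : ℝ) : ℂ) ≠ 0 := by exact_mod_cast hs.ne'
  have hcC : ((Real.cosh (x/2) : ℝ) : ℂ) ≠ 0 := by exact_mod_cast hc.ne'
  have h1 : HasDerivAt (fun y : ℝ => (((Real.sinh (y/2) : ℝ) : ℂ)) ^ ((μ - 1)/2))
      (((Real.cosh (x/2) / 2 : ℝ) : ℂ) • (((μ-1)/2) * ((Real.sinh (x/2) : ℝ) : ℂ) ^ ((μ-1)/2 - 1))) x := by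
    have hin : (((Real.sinh (x/2) : ℝ) : ℂ)) ∈ Complex.slitPlane := Or.inl (by rw [Complex.ofReal_re]; exact hs)
    exact HasDerivAt.scomp x
      (Complex.hasStrictDerivAt_cpow_const hin).hasDerivAt ((hsinh2 x).ofReal_comp)
  have h2 : HasDerivAt (fun y : ℝ => (((Real.cosh (y/2) : ℝ) : ℂ)) ^ ((1 - σ)/2))
      (((Real.sinh (x/2) / 2 : ℝ) : ℂ) • (((1-σ)/2) * ((Real.cosh (x/2) : ℝ) : ℂ) ^ ((1-σ)/2 - 1))) x := by
    have hin : (((Real.cosh (x/2) : ℝ) : ℂ)) ∈ Complex.slitPlane := Or.inl (by rw [Complex.ofReal_re]; exact hc)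
    exact HasDerivAt.scomp x
      (Complex.hasStrictDerivAt_cpow_const hin).hasDerivAt ((hcosh2 x).ofReal_comp)
  have h := h1.mul h2
  refine h.congr_deriv ?_
  have e1 : ((Real.sinh (x/2) : ℝ) : ℂ) ^ ((μ-1)/2 - 1)
      = ((Real.sinh (x/2) : ℝ) : ℂ) ^ ((μ-1)/2) / ((Real.sinh (x/2) : ℝ) : ℂ) := by
    rw [Complex.cpow_sub _ _ hsC, Complex.cpow_one]
  have e2 : ((Real.cosh (x/2) : ℝ) : ℂ) ^ ((1-σ)/2 - 1)
      = ((Real.cosh (x/2) : ℝ) : ℂ) ^ ((1-σ)/2) / ((Real.cosh (x/2) : ℝ) : ℂ) := by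
    rw [Complex.cpow_sub _ _ hcC, Complex.cpow_one]
  rw [gfun, Lfun, e1, e2]
  simp only [smul_eq_mul]
  push_cast
  field_simp

lemma key (σ μ lam U0 U1 U2 s c L Ld q : ℂ) (hs : s ≠ 0) (hc : c ≠ 0)
    (h2 : c^2 = 1 + s^2)
    (hL : 4*s*c*L = (μ-1)*c^2 + (1-σ)*s^2)
    (hLd : 16*s^2*c^2*Ld = 2*(1-μ)*c^2 + 2*(1-σ)*s^2)
    (hq : 16*s^2*c^2*q = (μ-1)*(μ-3)*c^4 - 2*(μ*(σ-2)+1)*s^2*c^2 + (σ+1)*(σ-1)*s^4) :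
    L*(L*U0 + s*c*U1) + (Ld*U0 + L*(s*c)*U1 + (c^2+s^2)/2*U1 + s*c*(s*c*U2)) + (lam - q)*U0
      = s^2*(1+s^2)*U2 + ((μ-σ+2)/2*s^2 + μ/2)*U1 + lam*U0 := by
  have hne : (16:ℂ)*s^2*c^2 ≠ 0 := by
    simp [hs, hc]
  apply mul_left_cancel₀ hne
  linear_combination ((4*s*c*L + ((μ-1)*c^2 + (1-σ)*s^2))*U0 + 8*s^2*c^2*U1) * hL
    + U0 * hLd - U0 * hq
    + (16*s^4*c^2*U2 + 8*μ*s^2*c^2*U1 + 2*((μ-1)*c^2 - (1-σ)*s^2)*U0) * h2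

lemma hphi (x : ℝ) :
    HasDerivAt (fun y : ℝ => Real.sinh (y/2)^2) (Real.sinh (x/2) * Real.cosh (x/2)) x := by
  have h := (hsinh2 x).pow 2
  refine h.congr_deriv ?_
  ring

lemma hLder (σ μ : ℂ) {x : ℝ} (hx : 0 < x) :
    HasDerivAt (Lfun σ μ)
      (((1-μ)/2 / (((Real.sinh (x/2) : ℝ) : ℂ))^2 + (1-σ)/2 / (((Real.cosh (x/2) : ℝ) : ℂ))^2)/4) x := by
  have hs : (0:ℝ) < Real.sinh (x/2) := Real.sinh_pos_iff.2 (by linarith)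
  have hc : (0:ℝ) < Real.cosh (x/2) := Real.cosh_pos _
  have hsC : ((Real.sinh (x/2) : ℝ) : ℂ) ≠ 0 := by exact_mod_cast hs.ne'
  have hcC : ((Real.cosh (x/2) : ℝ) : ℂ) ≠ 0 := by exact_mod_cast hc.ne'
  have h2 : (((Real.cosh (x/2) : ℝ) : ℂ))^2 = 1 + (((Real.sinh (x/2) : ℝ) : ℂ))^2 := by
    exact_mod_cast Real.cosh_sq' (x/2)
  have hA : HasDerivAt (fun y : ℝ => ((Real.cosh (y/2) : ℝ) : ℂ) / ((Real.sinh (y/2) : ℝ) : ℂ))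
      ((((Real.sinh (x/2) / 2 : ℝ) : ℂ) * ((Real.sinh (x/2) : ℝ) : ℂ)
        - ((Real.cosh (x/2) : ℝ) : ℂ) * ((Real.cosh (x/2) / 2 : ℝ) : ℂ)) / (((Real.sinh (x/2) : ℝ) : ℂ))^2) x :=
    ((hcosh2 x).ofReal_comp).div ((hsinh2 x).ofReal_comp) hsC
  have hB : HasDerivAt (fun y : ℝ => ((Real.sinh (y/2) : ℝ) : ℂ) / ((Real.cosh (y/2) : ℝ) : ℂ))
      ((((Real.cosh (x/2) / 2 : ℝ) : ℂ) * ((Real.cosh (x/2) : ℝ) : ℂ)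
        - ((Real.sinh (x/2) : ℝ) : ℂ) * ((Real.sinh (x/2) / 2 : ℝ) : ℂ)) / (((Real.cosh (x/2) : ℝ) : ℂ))^2) x :=
    ((hsinh2 x).ofReal_comp).div ((hcosh2 x).ofReal_comp) hcC
  have h := ((hA.const_mul ((μ-1)/2)).add (hB.const_mul ((1-σ)/2))).div_const 2
  refine h.congr_deriv ?_
  have hsC' : Complex.sinh ((x:ℂ)/2) ≠ 0 := by rw [← Complex.ofReal_ofNat, ← Complex.ofReal_div, ← Complex.ofReal_sinh]; exact hsC
  have hcC' : Complex.cosh ((x:ℂ)/2) ≠ 0 := by rw [← Complex.ofReal_ofNat, ← Complex.ofReal_div, ← Complex.ofReal_cosh]; exact hcC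
  have h2' : Complex.cosh ((x:ℂ)/2)^2 = 1 + Complex.sinh ((x:ℂ)/2)^2 := by
    rw [← Complex.ofReal_ofNat, ← Complex.ofReal_div, ← Complex.ofReal_sinh, ← Complex.ofReal_cosh]; exact h2
  push_cast
  field_simp
  linear_combination (-4 * ((μ-1)*Complex.cosh ((x:ℂ)/2)^2 - (1-σ)*Complex.sinh ((x:ℂ)/2)^2)) * h2'

lemma main (σ μ lam : ℂ) (u : ℝ → ℂ) (hu : ∀ t : ℝ, 0 < t → ContDiffAt ℝ (⊤ : ℕ∞) u t)
    {x : ℝ} (hx : 0 < x) :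
    deriv (deriv (fun y : ℝ => gfun σ μ y * u (Real.sinh (y / 2) ^ 2))) x +
        (lam - qstar σ μ x) * (gfun σ μ x * u (Real.sinh (x / 2) ^ 2)) =
      gfun σ μ x * (Dop σ μ u (Real.sinh (x / 2) ^ 2) + lam * u (Real.sinh (x / 2) ^ 2)) := by
  have hU : ContDiffOn ℝ (⊤ : ℕ∞) u (Set.Ioi 0) := fun s hs => (hu s hs).contDiffWithinAt
  have hU1 : ContDiffOn ℝ (⊤ : ℕ∞) (deriv u) (Set.Ioi 0) := hU.deriv_of_isOpen isOpen_Ioi (by simp)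
  have hphiPos : ∀ y : ℝ, 0 < y → 0 < Real.sinh (y/2)^2 := fun y hy =>
    pow_pos (Real.sinh_pos_iff.2 (by linarith)) 2
  have hud : ∀ y : ℝ, 0 < y →
      HasDerivAt u (deriv u (Real.sinh (y/2)^2)) (Real.sinh (y/2)^2) := fun y hy =>
    ((hu _ (hphiPos y hy)).differentiableAt (by simp)).hasDerivAt
  have hcomp : ∀ y : ℝ, 0 < y → HasDerivAt (fun z : ℝ => u (Real.sinh (z/2)^2))
      (((Real.sinh (y/2) : ℝ) : ℂ) * ((Real.cosh (y/2) : ℝ) : ℂ) * deriv u (Real.sinh (y/2)^2)) y := by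
    intro y hy
    have h := (hud y hy).scomp y (hphi y)
    have e : (Real.sinh (y/2) * Real.cosh (y/2)) • deriv u (Real.sinh (y/2)^2)
        = ((Real.sinh (y/2) : ℝ) : ℂ) * ((Real.cosh (y/2) : ℝ) : ℂ) * deriv u (Real.sinh (y/2)^2) := by
      rw [Complex.real_smul]
      push_cast [-Complex.ofReal_sinh, -Complex.ofReal_cosh]
      ring
    rw [e] at h
    simpa [Function.comp_def] using h
  have hY : ∀ y : ℝ, 0 < y → HasDerivAt (fun z : ℝ => gfun σ μ z * u (Real.sinh (z/2)^2))
      (gfun σ μ y * (Lfun σ μ y * u (Real.sinh (y/2)^2) +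
        ((Real.sinh (y/2) * Real.cosh (y/2) : ℝ) : ℂ) * deriv u (Real.sinh (y/2)^2))) y := by
    intro y hy
    have h := (hg σ μ hy).mul (hcomp y hy)
    refine h.congr_deriv ?_
    push_cast [-Complex.ofReal_sinh, -Complex.ofReal_cosh]
    ring
  have e2 : deriv (deriv (fun y : ℝ => gfun σ μ y * u (Real.sinh (y / 2) ^ 2))) x
      = deriv (fun y : ℝ => gfun σ μ y * (Lfun σ μ y * u (Real.sinh (y/2)^2) +
          ((Real.sinh (y/2) * Real.cosh (y/2) : ℝ) : ℂ) * deriv u (Real.sinh (y/2)^2))) x := by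
    have hev : deriv (fun y : ℝ => gfun σ μ y * u (Real.sinh (y / 2) ^ 2))
        =ᶠ[nhds x] (fun y : ℝ => gfun σ μ y * (Lfun σ μ y * u (Real.sinh (y/2)^2) +
          ((Real.sinh (y/2) * Real.cosh (y/2) : ℝ) : ℂ) * deriv u (Real.sinh (y/2)^2))) :=
      Filter.eventuallyEq_of_mem (isOpen_Ioi.mem_nhds hx) (fun y hy => (hY y hy).deriv)
    exact hev.deriv_eq
  -- abbreviations
  have hs : (0:ℝ) < Real.sinh (x/2) := Real.sinh_pos_iff.2 (by linarith)
  have hc : (0:ℝ) < Real.cosh (x/2) := Real.cosh_pos _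
  have hsC : ((Real.sinh (x/2) : ℝ) : ℂ) ≠ 0 := by exact_mod_cast hs.ne'
  have hcC : ((Real.cosh (x/2) : ℝ) : ℂ) ≠ 0 := by exact_mod_cast hc.ne'
  have h2 : (((Real.cosh (x/2) : ℝ) : ℂ))^2 = 1 + (((Real.sinh (x/2) : ℝ) : ℂ))^2 := by
    exact_mod_cast Real.cosh_sq' (x/2)
  have hud2 : HasDerivAt (deriv u) (deriv (deriv u) (Real.sinh (x/2)^2)) (Real.sinh (x/2)^2) :=
    ((hU1.contDiffAt (isOpen_Ioi.mem_nhds (hphiPos x hx))).differentiableAt (by simp)).hasDerivAt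
  have hcomp2 : HasDerivAt (fun z : ℝ => deriv u (Real.sinh (z/2)^2))
      (((Real.sinh (x/2) : ℝ) : ℂ) * ((Real.cosh (x/2) : ℝ) : ℂ) * deriv (deriv u) (Real.sinh (x/2)^2)) x := by
    have h := hud2.scomp x (hphi x)
    have e : (Real.sinh (x/2) * Real.cosh (x/2)) • deriv (deriv u) (Real.sinh (x/2)^2)
        = ((Real.sinh (x/2) : ℝ) : ℂ) * ((Real.cosh (x/2) : ℝ) : ℂ) * deriv (deriv u) (Real.sinh (x/2)^2) := by
      rw [Complex.real_smul]
      push_cast [-Complex.ofReal_sinh, -Complex.ofReal_cosh]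
      ring
    rw [e] at h
    simpa [Function.comp_def] using h
  have hsc : HasDerivAt (fun z : ℝ => ((Real.sinh (z/2) * Real.cosh (z/2) : ℝ) : ℂ))
      (((((Real.cosh (x/2) : ℝ) : ℂ))^2 + (((Real.sinh (x/2) : ℝ) : ℂ))^2)/2) x := by
    have h := ((hsinh2 x).mul (hcosh2 x)).ofReal_comp
    refine h.congr_deriv ?_
    push_cast [-Complex.ofReal_sinh, -Complex.ofReal_cosh]
    ring
  have hM := ((hLder σ μ hx).mul (hcomp x hx)).add (hsc.mul hcomp2)
  have hF := (hg σ μ hx).mul hM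
  simp only [Pi.mul_apply, Pi.add_apply] at hF
  rw [e2, show deriv (fun y : ℝ => gfun σ μ y * (Lfun σ μ y * u (Real.sinh (y/2)^2) +
      ((Real.sinh (y/2) * Real.cosh (y/2) : ℝ) : ℂ) * deriv u (Real.sinh (y/2)^2))) x = _ from hF.deriv, Dop]
  push_cast [-Complex.ofReal_sinh, -Complex.ofReal_cosh]
  set S : ℂ := ((Real.sinh (x/2) : ℝ) : ℂ) with hSdef
  set C : ℂ := ((Real.cosh (x/2) : ℝ) : ℂ) with hCdef
  have hS2 : S^2 ≠ 0 := pow_ne_zero 2 hsC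
  have hC2 : C^2 ≠ 0 := pow_ne_zero 2 hcC
  have hL : 4*S*C*(Lfun σ μ x) = (μ-1)*C^2 + (1-σ)*S^2 := by
    rw [Lfun, ← hSdef, ← hCdef]
    have e : 4*S*C*((((μ - 1) / 2 * (C / S) + (1 - σ) / 2 * (S / C))) / 2)
        = (μ-1)*C^2*(S/S) + (1-σ)*S^2*(C/C) := by ring
    rw [e, div_self hsC, div_self hcC]; ring
  have hLd : 16*S^2*C^2 * (((1-μ)/2 / S^2 + (1-σ)/2 / C^2)/4)
      = 2*(1-μ)*C^2 + 2*(1-σ)*S^2 := by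
    have e : 16*S^2*C^2 * (((1-μ)/2 / S^2 + (1-σ)/2 / C^2)/4)
        = 2*(1-μ)*C^2*(S^2/S^2) + 2*(1-σ)*S^2*(C^2/C^2) := by ring
    rw [e, div_self hS2, div_self hC2]; ring
  have hq : 16*S^2*C^2 * qstar σ μ x
      = (μ-1)*(μ-3)*C^4 - 2*(μ*(σ-2)+1)*S^2*C^2 + (σ+1)*(σ-1)*S^4 := by
    rw [qstar, Real.tanh_eq_sinh_div_cosh]
    push_cast [-Complex.ofReal_sinh, -Complex.ofReal_cosh]
    rw [← hSdef, ← hCdef, div_pow, inv_div]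
    have e : 16*S^2*C^2 * ((μ - 1) * (μ - 3) / 16 * (C^2/S^2) - (μ * (σ - 2) + 1) / 8 +
          (σ + 1) * (σ - 1) / 16 * (S^2/C^2))
        = (μ-1)*(μ-3)*C^4*(S^2/S^2) - 2*(μ*(σ-2)+1)*S^2*C^2 + (σ+1)*(σ-1)*S^4*(C^2/C^2) := by ring
    rw [e, div_self hS2, div_self hC2]; ring
  have KEY := key σ μ lam (u (Real.sinh (x/2)^2)) (deriv u (Real.sinh (x/2)^2))
    (deriv (deriv u) (Real.sinh (x/2)^2)) S C
    (Lfun σ μ x) (((1-μ)/2 / S^2 + (1-σ)/2 / C^2)/4)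
    (qstar σ μ x) hsC hcC h2 hL hLd hq
  linear_combination (gfun σ μ x) * KEY

lemma gne (σ μ : ℂ) {x : ℝ} (hx : 0 < x) : gfun σ μ x ≠ 0 := by
  have hs : (0:ℝ) < Real.sinh (x/2) := Real.sinh_pos_iff.2 (by linarith)
  have hc : (0:ℝ) < Real.cosh (x/2) := Real.cosh_pos _
  have hsC : ((Real.sinh (x/2) : ℝ) : ℂ) ≠ 0 := by exact_mod_cast hs.ne'
  have hcC : ((Real.cosh (x/2) : ℝ) : ℂ) ≠ 0 := by exact_mod_cast hc.ne'
  have hsC' : Complex.sinh ((x:ℂ)/2) ≠ 0 := by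
    rw [← Complex.ofReal_ofNat, ← Complex.ofReal_div, ← Complex.ofReal_sinh]; exact hsC
  have hcC' : Complex.cosh ((x:ℂ)/2) ≠ 0 := by
    rw [← Complex.ofReal_ofNat, ← Complex.ofReal_div, ← Complex.ofReal_cosh]; exact hcC
  simp [gfun, Complex.cpow_eq_zero_iff, hsC', hcC']

/-- with `y(x) = r(x)⁻¹ u(sinh²(x/2))` one has
`y'' + (λ* − q*)y = r⁻¹ (𝒟_{σ,μ}u + λ* u)(sinh²(x/2))` on `(0,∞)`; in particular
`𝒟_{σ,μ}u + λ*u = 0` on `(0,∞)` iff `y'' + (λ* − q*)y = 0` on `(0,∞)`. -/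
theorem stmt7 (σ μ lam : ℂ) (u : ℝ → ℂ) (hu : ∀ t : ℝ, 0 < t → ContDiffAt ℝ (⊤ : ℕ∞) u t) :
    (∀ x : ℝ, 0 < x →
      deriv (deriv (fun s : ℝ => (rfun σ μ s)⁻¹ * u (Real.sinh (s / 2) ^ 2))) x +
          (lam - qstar σ μ x) * ((rfun σ μ x)⁻¹ * u (Real.sinh (x / 2) ^ 2)) =
        (rfun σ μ x)⁻¹ *
          (Dop σ μ u (Real.sinh (x / 2) ^ 2) + lam * u (Real.sinh (x / 2) ^ 2))) ∧
    ((∀ t : ℝ, 0 < t → Dop σ μ u t + lam * u t = 0) ↔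
      (∀ x : ℝ, 0 < x →
        deriv (deriv (fun s : ℝ => (rfun σ μ s)⁻¹ * u (Real.sinh (s / 2) ^ 2))) x +
          (lam - qstar σ μ x) * ((rfun σ μ x)⁻¹ * u (Real.sinh (x / 2) ^ 2)) = 0)) := by
  have hA : ∀ x : ℝ, 0 < x →
      deriv (deriv (fun s : ℝ => (rfun σ μ s)⁻¹ * u (Real.sinh (s / 2) ^ 2))) x +
          (lam - qstar σ μ x) * ((rfun σ μ x)⁻¹ * u (Real.sinh (x / 2) ^ 2)) =
        (rfun σ μ x)⁻¹ *
          (Dop σ μ u (Real.sinh (x / 2) ^ 2) + lam * u (Real.sinh (x / 2) ^ 2)) := by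
    intro x hx
    simp only [hrg]
    exact main σ μ lam u hu hx
  refine ⟨hA, ?_, ?_⟩
  · intro h x hx
    have ht : 0 < Real.sinh (x/2)^2 := pow_pos (Real.sinh_pos_iff.2 (by linarith)) 2
    rw [hA x hx, h _ ht, mul_zero]
  · intro h t ht
    set x := 2 * Real.arsinh (Real.sqrt t) with hxdef
    have hx : 0 < x := by
      have := Real.arsinh_pos_iff.2 (Real.sqrt_pos.2 ht)
      rw [hxdef]; linarith
    have hxt : Real.sinh (x/2)^2 = t := by
      rw [hxdef, mul_div_cancel_left₀ _ (two_ne_zero), Real.sinh_arsinh, Real.sq_sqrt ht.le]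
    have h1 := h x hx
    rw [hA x hx, hxt] at h1
    have hne : (rfun σ μ x)⁻¹ ≠ 0 := by rw [hrg]; exact gne σ μ hx
    exact (mul_eq_zero.mp h1).resolve_left hne
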